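/- Let G be an activity-on-edge graph and let H be any graph obtained from G by a finite sequence of applications of the simplification rules (Rule 1: merge two vertices with no outgoing task edges and identical outgoing neighbor sets, or two vertices with no incoming task edges and identical incoming neighbor sets; Rule 2: delete an unlabeled edge (u,v) when another path from u to v exists; Rule 3: merge the endpoints of an unlabeled edge (u,v) satisfying the conditions of Rule 3). Then G and H have the same set of potential critical paths, i.e., G ≡ H. -/

import Mathlib

/-!
Potential critical paths depend on an AOE only through the relation "task `t` reaches task
`t'`", so it suffices that every rule preserves it. Paths of `G` map to paths of the new
graph: a merge keeps every edge, the edge deleted by Rule 2 is replaced by the other path from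
`u` to `v`, and the one deleted by Rule 3 joins two vertices that become equal. Conversely, a
path of the new graph lifts to `G` up to jumps between `u` and `v` at the merged vertex. Under
Rule 1 both have the same out- (resp. in-) neighbours, so the jump is harmless. Under Rule 3 a
jump from `u` to `v` follows the edge `(u, v)`, a jump from `v` to `u` is bridged by
condition (iv), and conditions (ii) and (iii) handle tasks that start at `u` or end at `v`.
-/

namespace AOEPaper

/-- An activity-on-edge graph: a directed multigraph on the vertex set `verts`,
whose task edges are indexed by the type `T` (the distinct task labels), each task `t`
being an edge from `St t` to `En t`, together with a multiset `unl` of unlabeled edges. -/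
structure AOE (V T : Type) where
  verts : Finset V
  St : T → V
  En : T → V
  stMem : ∀ t, St t ∈ verts
  enMem : ∀ t, En t ∈ verts
  unl : Multiset (V × V)
  unlMem : ∀ e ∈ unl, e.1 ∈ verts ∧ e.2 ∈ verts

/-- One-step adjacency: an unlabeled edge or a task edge from `a` to `b`. -/
def AOE.adj {V T : Type} (G : AOE V T) (a b : V) : Prop :=
  (a, b) ∈ G.unl ∨ ∃ t, G.St t = a ∧ G.En t = b

/-- The graph has no directed cycle. -/
def AOE.Acyclic {V T : Type} (G : AOE V T) : Prop :=
  ∀ v : V, ¬ Relation.TransGen G.adj v v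

/-- Task `t` reaches task `t'`: `En t = St t'` or there is a directed path from
`En t` to `St t'` (intended only for `t ≠ t'`). -/
def AOE.reach {V T : Type} (G : AOE V T) (t t' : T) : Prop :=
  Relation.ReflTransGen G.adj (G.En t) (G.St t')

/-- A sequence of tasks in which each task reaches the next. -/
def AOE.chain {V T : Type} (G : AOE V T) (l : List T) : Prop :=
  l.Chain' fun t t' => t ≠ t' ∧ G.reach t t'

/-- A potential critical path: a maximal sequence of tasks in which each task
reaches the next (not a subsequence of any other such sequence). -/
def AOE.critPath {V T : Type} (G : AOE V T) (l : List T) : Prop :=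
  G.chain l ∧ ∀ l' : List T, G.chain l' → l.Sublist l' → l' = l

/-- Two AOEs with the same task labels are equivalent if they have the same set of
potential critical paths. -/
def AOE.Equiv {V W T : Type} (G : AOE V T) (H : AOE W T) : Prop :=
  ∀ l : List T, G.critPath l ↔ H.critPath l

/-- An AOE is optimal if it minimizes the number of vertices in its equivalence class. -/
def Optimal {W T : Type} (G : AOE W T) : Prop :=
  ∀ (U : Type) (H : AOE U T), H.Acyclic → AOE.Equiv G H → G.verts.card ≤ H.verts.card

/-- The vertex map replacing `v` by `u`. -/
def mergeV {V : Type} [DecidableEq V] (u v x : V) : V := if x = v then u else x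

theorem mergeV_mem {V : Type} [DecidableEq V] {S : Finset V} (u v x : V) (hx : x ∈ S) :
    mergeV u v x ∈ insert u (S.erase v) := by
  unfold mergeV
  split_ifs with h
  · exact Finset.mem_insert_self _ _
  · exact Finset.mem_insert_of_mem (Finset.mem_erase.mpr ⟨h, hx⟩)

/-- Merge vertices `u` and `v` into the single vertex `u`. -/
def AOE.merge {V T : Type} [DecidableEq V] (G : AOE V T) (u v : V) : AOE V T where
  verts := insert u (G.verts.erase v)
  St t := mergeV u v (G.St t)
  En t := mergeV u v (G.En t)
  stMem t := mergeV_mem u v (G.St t) (G.stMem t)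
  enMem t := mergeV_mem u v (G.En t) (G.enMem t)
  unl := G.unl.map fun e => (mergeV u v e.1, mergeV u v e.2)
  unlMem := by
    intro e he
    rw [Multiset.mem_map] at he
    obtain ⟨a, ha, rfl⟩ := he
    obtain ⟨h1, h2⟩ := G.unlMem a ha
    exact ⟨mergeV_mem u v a.1 h1, mergeV_mem u v a.2 h2⟩

/-- Delete one copy of the unlabeled edge `(u, v)`. -/
def AOE.delUnl {V T : Type} [DecidableEq V] (G : AOE V T) (u v : V) : AOE V T where
  verts := G.verts
  St := G.St
  En := G.En
  stMem := G.stMem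
  enMem := G.enMem
  unl := G.unl.erase (u, v)
  unlMem := fun e he => G.unlMem e (Multiset.mem_of_mem_erase he)

/-- Rule 1 (outgoing version): `u` and `v` are distinct vertices with no outgoing task
edges and precisely the same outgoing neighbors. -/
def Rule1OutCond {V T : Type} (G : AOE V T) (u v : V) : Prop :=
  u ∈ G.verts ∧ v ∈ G.verts ∧ u ≠ v ∧
    (∀ t, G.St t ≠ u) ∧ (∀ t, G.St t ≠ v) ∧ ∀ w, G.adj u w ↔ G.adj v w

/-- Rule 1 (incoming version): `u` and `v` are distinct vertices with no incoming task
edges and precisely the same incoming neighbors. -/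
def Rule1InCond {V T : Type} (G : AOE V T) (u v : V) : Prop :=
  u ∈ G.verts ∧ v ∈ G.verts ∧ u ≠ v ∧
    (∀ t, G.En t ≠ u) ∧ (∀ t, G.En t ≠ v) ∧ ∀ w, G.adj w u ↔ G.adj w v

/-- Rule 2: `(u, v)` is an unlabeled edge and there is another directed path from `u`
to `v` not using this edge. -/
def Rule2Cond {V T : Type} [DecidableEq V] (G : AOE V T) (u v : V) : Prop :=
  (u, v) ∈ G.unl ∧ Relation.TransGen (G.delUnl u v).adj u v

/-- Rule 3: `(u, v)` is an unlabeled edge such that (i) there is no other path from `u`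
to `v`; (ii) if `u` has an outgoing task then `v` has no incoming edge other than `(u,v)`;
(iii) if `v` has an incoming task then `u` has no outgoing edge other than `(u,v)`;
(iv) every incoming neighbor of `v` has a path to every outgoing neighbor of `u`. -/
def Rule3Cond {V T : Type} [DecidableEq V] (G : AOE V T) (u v : V) : Prop :=
  (u, v) ∈ G.unl ∧
  (¬ Relation.TransGen (G.delUnl u v).adj u v) ∧
  ((∃ t, G.St t = u) → (∀ t, G.En t ≠ v) ∧ ∀ w, (w, v) ∈ G.unl → w = u) ∧
  ((∃ t, G.En t = v) → (∀ t, G.St t ≠ u) ∧ ∀ w, (u, w) ∈ G.unl → w = v) ∧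
  ∀ w z, G.adj w v → G.adj u z → Relation.ReflTransGen G.adj w z

/-- One application of a simplification rule. -/
inductive Step {V T : Type} [DecidableEq V] : AOE V T → AOE V T → Prop
  | rule1out {G : AOE V T} (u v : V) : Rule1OutCond G u v → Step G (G.merge u v)
  | rule1in {G : AOE V T} (u v : V) : Rule1InCond G u v → Step G (G.merge u v)
  | rule2 {G : AOE V T} (u v : V) : Rule2Cond G u v → Step G (G.delUnl u v)
  | rule3 {G : AOE V T} (u v : V) : Rule3Cond G u v → Step G ((G.delUnl u v).merge u v)

/-- A canonical AOE: the naive expansion of an activity-on-node graph. Each task has its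
own pair of endpoint vertices, all pairwise distinct; there are a global start vertex `s`
and a global end vertex `e`; unlabeled edges other than those leaving `s` or entering `e`
go from end vertices of tasks to start vertices of tasks; `s` has unlabeled edges to
exactly the vertices whose only incoming edges come from `s`, and `e` has unlabeled edges
from exactly the vertices whose only outgoing edges go to `e`. -/
def Canonical {V T : Type} [DecidableEq V] [Fintype T] (G : AOE V T) : Prop :=
  G.Acyclic ∧ G.unl.Nodup ∧
  Function.Injective G.St ∧ Function.Injective G.En ∧
  (∀ t t' : T, G.St t ≠ G.En t') ∧
  ∃ s e : V, s ≠ e ∧ s ∈ G.verts ∧ e ∈ G.verts ∧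
    (∀ t, G.St t ≠ s ∧ G.St t ≠ e ∧ G.En t ≠ s ∧ G.En t ≠ e) ∧
    (G.verts =
      insert s (insert e (Finset.image G.St Finset.univ ∪ Finset.image G.En Finset.univ))) ∧
    (∀ a b : V, (a, b) ∈ G.unl → a ≠ s → b ≠ e → (∃ t, G.En t = a) ∧ ∃ t', G.St t' = b) ∧
    (∀ b : V, (s, b) ∈ G.unl ↔
      b ∈ G.verts ∧ b ≠ s ∧ (∀ t, G.En t ≠ b) ∧ ∀ a, (a, b) ∈ G.unl → a = s) ∧
    (∀ a : V, (a, e) ∈ G.unl ↔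
      a ∈ G.verts ∧ a ≠ e ∧ (∀ t, G.St t ≠ a) ∧ ∀ b, (a, b) ∈ G.unl → b = e)

/-- An output AOE: obtained from a canonical AOE by a finite sequence of rule
applications, such that no rule can still be applied. -/
def IsOutput {V T : Type} [DecidableEq V] [Fintype T] (G A : AOE V T) : Prop :=
  Canonical G ∧ Relation.ReflTransGen Step G A ∧ ∀ B : AOE V T, ¬ Step A B

theorem mergeSetV_mem {V : Type} [DecidableEq V] {S : Finset V} (C : Finset V) (c x : V)
    (hx : x ∈ S) : (if x ∈ C then c else x) ∈ insert c (S \ C) := by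
  split_ifs with h
  · exact Finset.mem_insert_self _ _
  · exact Finset.mem_insert_of_mem (Finset.mem_sdiff.mpr ⟨hx, h⟩)

/-- Merge all vertices of `C` into the single vertex `c`. -/
def AOE.mergeSet {V T : Type} [DecidableEq V] (G : AOE V T) (C : Finset V) (c : V) :
    AOE V T where
  verts := insert c (G.verts \ C)
  St t := if G.St t ∈ C then c else G.St t
  En t := if G.En t ∈ C then c else G.En t
  stMem t := mergeSetV_mem C c (G.St t) (G.stMem t)
  enMem t := mergeSetV_mem C c (G.En t) (G.enMem t)
  unl := G.unl.map fun e => (if e.1 ∈ C then c else e.1, if e.2 ∈ C then c else e.2)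
  unlMem := by
    intro e he
    rw [Multiset.mem_map] at he
    obtain ⟨a, ha, rfl⟩ := he
    obtain ⟨h1, h2⟩ := G.unlMem a ha
    exact ⟨mergeSetV_mem C c a.1 h1, mergeSetV_mem C c a.2 h2⟩

theorem _root_.Relation.ReflTransGen.exists_lift {α β : Type*} {s : β → β → Prop}
    {f : α → β} {P : α → Prop} (hstep : ∀ c y, P c → s (f c) y → ∃ d, f d = y ∧ P d)
    {c : α} {y : β} (hc : P c) (h : Relation.ReflTransGen s (f c) y) :
    ∃ d, f d = y ∧ P d := by
  induction h with
  | refl => exact ⟨c, rfl, hc⟩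
  | tail _ hxy ih =>
    obtain ⟨d, rfl, hd⟩ := ih
    exact hstep d _ hd hxy

section Merge

variable {V : Type} [DecidableEq V]

theorem mergeV_left (u v : V) : mergeV u v u = u := ite_self u

theorem mergeV_right (u v : V) : mergeV u v v = u := if_pos rfl

theorem mergeV_eq_mergeV {u v a b : V} (h : mergeV u v a = mergeV u v b) :
    a = b ∨ (a = u ∨ a = v) ∧ (b = u ∨ b = v) := by
  unfold mergeV at h
  split_ifs at h <;> tauto

theorem eq_of_mergeV_eq_mergeV {u v b x : V} (h : mergeV u v b = mergeV u v x)
    (hu : x ≠ u) (hv : x ≠ v) : b = x := by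
  rcases mergeV_eq_mergeV h with h | ⟨-, hx | hx⟩
  · exact h
  · exact absurd hx hu
  · exact absurd hx hv

end Merge

namespace AOE

theorem critPath_iff_of_reach_iff {V W T : Type} {G : AOE V T} {H : AOE W T}
    (h : ∀ t t', G.reach t t' ↔ H.reach t t') (l : List T) :
    G.critPath l ↔ H.critPath l := by
  have hchain : ∀ l', G.chain l' ↔ H.chain l' := fun l' => by
    simp only [chain, h]
  simp only [critPath, hchain]

variable {V T : Type} [DecidableEq V]

theorem merge_adj_iff (G : AOE V T) (u v x y : V) :
    (G.merge u v).adj x y ↔ ∃ a b, G.adj a b ∧ mergeV u v a = x ∧ mergeV u v b = y := by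
  constructor
  · rintro (h | ⟨t, rfl, rfl⟩)
    · obtain ⟨⟨a, b⟩, hab, he⟩ := Multiset.mem_map.mp h
      obtain ⟨rfl, rfl⟩ := Prod.mk.inj he
      exact ⟨a, b, Or.inl hab, rfl, rfl⟩
    · exact ⟨G.St t, G.En t, Or.inr ⟨t, rfl, rfl⟩, rfl, rfl⟩
  · rintro ⟨a, b, h | ⟨t, rfl, rfl⟩, rfl, rfl⟩
    · exact Or.inl (Multiset.mem_map.mpr ⟨(a, b), h, rfl⟩)
    · exact Or.inr ⟨t, rfl, rfl⟩

theorem adj_of_delUnl_adj {G : AOE V T} {u v a b : V} (h : (G.delUnl u v).adj a b) :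
    G.adj a b :=
  h.imp_left Multiset.mem_of_mem_erase

theorem eq_or_delUnl_adj_of_adj {G : AOE V T} (u v : V) {a b : V} (h : G.adj a b) :
    (a = u ∧ b = v) ∨ (G.delUnl u v).adj a b := by
  by_cases he : (a, b) = (u, v)
  · exact Or.inl (Prod.mk.inj he)
  · exact Or.inr (h.imp_left (Multiset.mem_erase_of_ne he).mpr)

theorem reach_merge_of_reach {G : AOE V T} {u v : V} {t t' : T} (h : G.reach t t') :
    (G.merge u v).reach t t' :=
  Relation.ReflTransGen.lift (mergeV u v)
    (fun a b hab => (merge_adj_iff G u v _ _).mpr ⟨a, b, hab, rfl, rfl⟩) _ _ h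

theorem reach_merge_delUnl_of_reach {G : AOE V T} {u v : V} {t t' : T} (h : G.reach t t') :
    ((G.delUnl u v).merge u v).reach t t' := by
  refine Relation.ReflTransGen.lift' (mergeV u v) (fun a b hab => ?_) _ _ h
  rcases eq_or_delUnl_adj_of_adj u v hab with ⟨rfl, rfl⟩ | hab
  · show Relation.ReflTransGen _ (mergeV a b a) (mergeV a b b)
    rw [mergeV_left, mergeV_right]
  · exact .single ((merge_adj_iff _ u v _ _).mpr ⟨a, b, hab, rfl, rfl⟩)

end AOE

section Rules

variable {V T : Type} [DecidableEq V] {G : AOE V T} {u v : V}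

theorem Rule1OutCond.adj_iff_of_mergeV_eq (hc : Rule1OutCond G u v) {a c : V}
    (h : mergeV u v a = mergeV u v c) (b : V) : G.adj a b ↔ G.adj c b := by
  obtain ⟨-, -, -, -, -, hadj⟩ := hc
  rcases mergeV_eq_mergeV h with rfl | ⟨rfl | rfl, rfl | rfl⟩ <;>
    first | rfl | exact hadj b | exact (hadj b).symm

theorem Rule1InCond.adj_iff_of_mergeV_eq (hc : Rule1InCond G u v) {a c : V}
    (h : mergeV u v a = mergeV u v c) (b : V) : G.adj b a ↔ G.adj b c := by
  obtain ⟨-, -, -, -, -, hadj⟩ := hc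
  rcases mergeV_eq_mergeV h with rfl | ⟨rfl | rfl, rfl | rfl⟩ <;>
    first | rfl | exact hadj b | exact (hadj b).symm

theorem Rule1OutCond.reach_iff (hc : Rule1OutCond G u v) (t t' : T) :
    G.reach t t' ↔ (G.merge u v).reach t t' := by
  obtain ⟨-, -, -, hu, hv, -⟩ := id hc
  refine ⟨AOE.reach_merge_of_reach, fun h => ?_⟩
  obtain ⟨d, hd, hpath⟩ := Relation.ReflTransGen.exists_lift (f := mergeV u v)
    (P := Relation.ReflTransGen G.adj (G.En t)) (fun c y hpc hcy => by
      obtain ⟨a, b, hab, ha, rfl⟩ := (AOE.merge_adj_iff G u v _ _).mp hcy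
      exact ⟨b, rfl, hpc.tail ((hc.adj_iff_of_mergeV_eq ha b).mp hab)⟩) .refl h
  rwa [eq_of_mergeV_eq_mergeV hd (hu t') (hv t')] at hpath

theorem Rule1InCond.reach_iff (hc : Rule1InCond G u v) (t t' : T) :
    G.reach t t' ↔ (G.merge u v).reach t t' := by
  obtain ⟨-, -, -, hu, hv, -⟩ := id hc
  refine ⟨AOE.reach_merge_of_reach, fun h => ?_⟩
  obtain ⟨d, hd, hpath⟩ := Relation.ReflTransGen.exists_lift (f := mergeV u v)
    (P := fun d => Relation.ReflTransGen G.adj d (G.St t')) (fun c y hcb hyc => by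
      obtain ⟨a, b, hab, rfl, hb⟩ := (AOE.merge_adj_iff G u v _ _).mp hyc
      exact ⟨a, rfl, hcb.head ((hc.adj_iff_of_mergeV_eq hb a).mp hab)⟩)
    .refl (Relation.reflTransGen_swap.mpr h)
  rwa [eq_of_mergeV_eq_mergeV hd (hu t) (hv t)] at hpath

theorem Rule2Cond.reach_iff (hc : Rule2Cond G u v) (t t' : T) :
    G.reach t t' ↔ (G.delUnl u v).reach t t' := by
  refine ⟨fun h => Relation.ReflTransGen.lift' id (fun a b hab => ?_) _ _ h,
    fun h => Relation.ReflTransGen.mono (fun _ _ => AOE.adj_of_delUnl_adj) _ _ h⟩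
  rcases AOE.eq_or_delUnl_adj_of_adj u v hab with ⟨rfl, rfl⟩ | hab
  · exact hc.2.to_reflTransGen
  · exact .single hab

/-- Standing at `v` in the graph where `u` and `v` are merged lets a path leave along any edge
out of `u`, so along a lifted path we also track that every out-neighbour of `u` is reached. -/
def MergeReached (G : AOE V T) (u v p c : V) : Prop :=
  Relation.ReflTransGen G.adj p c ∧ (c = v → ∀ z, G.adj u z → Relation.ReflTransGen G.adj p z)

theorem MergeReached.of_adj (huv : G.adj u v)
    (hiv : ∀ w z, G.adj w v → G.adj u z → Relation.ReflTransGen G.adj w z) {p c a z : V}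
    (hc : MergeReached G u v p c) (hac : mergeV u v a = mergeV u v c) (haz : G.adj a z) :
    MergeReached G u v p z := by
  by_cases hvu : c = v ∧ a = u
  · obtain ⟨rfl, rfl⟩ := hvu
    exact ⟨hc.2 rfl z haz, fun _ => hc.2 rfl⟩
  have hpa : Relation.ReflTransGen G.adj p a := by
    rcases mergeV_eq_mergeV hac with rfl | ⟨rfl | rfl, rfl | rfl⟩
    · exact hc.1
    · exact hc.1
    · exact absurd ⟨rfl, rfl⟩ hvu
    · exact hc.1.tail huv
    · exact hc.1
  exact ⟨hpa.tail haz, fun hz z' huz => hpa.trans (hiv a z' (hz ▸ haz) huz)⟩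

theorem Rule3Cond.eq_of_adj_right (hc : Rule3Cond G u v) (ht : ∃ t, G.St t = u) {w : V}
    (hw : G.adj w v) : w = u := by
  obtain ⟨hnoTask, hnoUnl⟩ := hc.2.2.1 ht
  rcases hw with hw | ⟨t, -, ht'⟩
  · exact hnoUnl w hw
  · exact absurd ht' (hnoTask t)

theorem Rule3Cond.eq_of_adj_left (hc : Rule3Cond G u v) (ht : ∃ t, G.En t = v) {z : V}
    (hz : G.adj u z) : z = v := by
  obtain ⟨hnoTask, hnoUnl⟩ := hc.2.2.2.1 ht
  rcases hz with hz | ⟨t, ht', -⟩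
  · exact hnoUnl z hz
  · exact absurd ht' (hnoTask t)

theorem Rule3Cond.reach_iff (hc : Rule3Cond G u v) (t t' : T) :
    G.reach t t' ↔ ((G.delUnl u v).merge u v).reach t t' := by
  obtain ⟨huv, -, hii, -, hiv⟩ := id hc
  refine ⟨AOE.reach_merge_delUnl_of_reach, fun h => ?_⟩
  have hstart : MergeReached G u v (G.En t) (G.En t) :=
    ⟨.refl, fun hv z hz => by rw [hc.eq_of_adj_left ⟨t, hv⟩ hz, hv]⟩
  obtain ⟨c, hcSt, hpc, -⟩ := Relation.ReflTransGen.exists_lift (f := mergeV u v)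
    (P := MergeReached G u v (G.En t)) (fun c y hpc hcy => by
      obtain ⟨a, z, haz, ha, rfl⟩ := (AOE.merge_adj_iff (G.delUnl u v) u v _ _).mp hcy
      exact ⟨z, rfl, hpc.of_adj (Or.inl huv) hiv ha (AOE.adj_of_delUnl_adj haz)⟩) hstart h
  show Relation.ReflTransGen G.adj (G.En t) (G.St t')
  replace hcSt : mergeV u v c = mergeV u v (G.St t') := hcSt
  rcases mergeV_eq_mergeV hcSt with rfl | ⟨hcuv | hcuv, hs | hs⟩
  · exact hpc
  all_goals rw [hcuv] at hpc; rw [hs]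
  · exact hpc
  · exact hpc.tail (Or.inl huv)
  · -- the last edge into `v` must come from `u`, since `u` starts the task `t'`
    rcases hpc.cases_tail with hv | ⟨w, hpw, hwv⟩
    · exact absurd hv.symm ((hii ⟨t', hs⟩).1 t)
    · rwa [← hc.eq_of_adj_right ⟨t', hs⟩ hwv]
  · exact hpc

theorem Step.reach_iff {H : AOE V T} (h : Step G H) (t t' : T) :
    G.reach t t' ↔ H.reach t t' := by
  cases h with
  | rule1out u v hc => exact hc.reach_iff t t'
  | rule1in u v hc => exact hc.reach_iff t t'
  | rule2 u v hc => exact hc.reach_iff t t'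
  | rule3 u v hc => exact hc.reach_iff t t'

end Rules

theorem stmt4_general {V T : Type} [DecidableEq V] (G H : AOE V T)
    (h : Relation.ReflTransGen Step G H) :
    ∀ l : List T, G.critPath l ↔ H.critPath l := by
  refine AOE.critPath_iff_of_reach_iff fun t t' => ?_
  induction h with
  | refl => rfl
  | tail _ hstep ih => exact ih.trans (hstep.reach_iff t t')

/-- Any graph obtained from an AOE `G` by a finite sequence of applications
of Rules 1, 2 and 3 has the same set of potential critical paths as `G` (i.e. is
equivalent to `G`). -/
theorem stmt4 {V T : Type} [DecidableEq V] (G H : AOE V T) (hG : G.Acyclic)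
    (h : Relation.ReflTransGen Step G H) :
    ∀ l : List T, G.critPath l ↔ H.critPath l :=
  stmt4_general G H h

end AOEPaper
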